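/- arXiv:1710.08496 — 5 statements merged into one kernel-verified Lean document; each statement's English description precedes it below -/
import Mathlib

section
/- Let A be a real symmetric positive definite d×d matrix with condition number κ = ‖A‖/λ_min(A), let c > 0, and let Ĥ be a real symmetric positive semidefinite d×d matrix with ‖Ĥ − A‖ ≤ c‖A‖. Set H = Ĥ + c‖A‖·I. Then H is positive definite (hence invertible) and (1 − 2cκ/(1 + 2cκ))·A⁻¹ ⪯ H⁻¹ ⪯ A⁻¹ in the Loewner order. -/
/-!
Write `E = Ĥ - A`, `s = c‖A‖` and `μ = λ_min(A)`. Since `E` is symmetric with `‖E‖ ≤ s`, we have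
`-s·I ⪯ E ⪯ s·I`, hence `A ⪯ H = A + E + s·I ⪯ A + 2s·I`. Because `2s = 2cκ·μ` and `μ·I ⪯ A`,
this gives `A ⪯ H ⪯ (1 + 2cκ)·A`, and both inequalities invert since matrix inversion is
antitone on positive definite matrices.
-/

open Matrix

/-- Spectral norm (largest singular value) of a real matrix. -/
noncomputable def specNorm {m n : ℕ} (A : Matrix (Fin m) (Fin n) ℝ) : ℝ :=
  ‖(LinearMap.toContinuousLinearMap (Matrix.toEuclideanLin A))‖

namespace Matrix

variable {n K : Type*} [Fintype n] [DecidableEq n]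

/-- Both Schur complements of the block matrix `[[B, 1], [1, A⁻¹]]` are positive semidefinite
together: they are `B - A` and `A⁻¹ - B⁻¹`. -/
theorem PosDef.posSemidef_inv_sub_inv [Field K] [PartialOrder K] [StarRing K] [StarOrderedRing K]
    {A B : Matrix n n K} (hA : A.PosDef) (hAB : (B - A).PosSemidef) :
    (A⁻¹ - B⁻¹).PosSemidef := by
  have hB : B.PosDef := by simpa using hA.add_posSemidef hAB
  have := hA.isUnit.invertible
  have := hB.isUnit.invertible
  have hblock : (fromBlocks B 1 1ᴴ A⁻¹).PosSemidef := by
    rw [PosDef.fromBlocks₂₂ _ _ hA.inv]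
    simpa using hAB
  rw [PosDef.fromBlocks₁₁ _ _ hB] at hblock
  simpa using hblock

open scoped MatrixOrder in
theorem IsHermitian.posSemidef_sub_iInf_eigenvalues_smul_one {A : Matrix n n ℝ}
    (hA : A.IsHermitian) : (A - (⨅ i, hA.eigenvalues i) • (1 : Matrix n n ℝ)).PosSemidef := by
  rw [← Matrix.le_iff, ← Algebra.algebraMap_eq_smul_one,
    algebraMap_le_iff_le_spectrum hA.isSelfAdjoint, hA.spectrum_real_eq_range_eigenvalues]
  rintro _ ⟨i, rfl⟩
  exact ciInf_le (Finite.bddBelow_range _) i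

theorem PosDef.iInf_eigenvalues_pos [Nonempty n] {A : Matrix n n ℝ} (hA : A.PosDef) :
    0 < ⨅ i, hA.isHermitian.eigenvalues i := by
  obtain ⟨i, hi⟩ := exists_eq_ciInf_of_finite (f := hA.isHermitian.eigenvalues)
  exact hi ▸ hA.eigenvalues_pos i

end Matrix

@[simp] theorem specNorm_neg {m n : ℕ} (A : Matrix (Fin m) (Fin n) ℝ) :
    specNorm (-A) = specNorm A := by
  simp [specNorm]

theorem abs_dotProduct_mulVec_le_specNorm {d : ℕ} (M : Matrix (Fin d) (Fin d) ℝ)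
    (x : Fin d → ℝ) : |x ⬝ᵥ (M *ᵥ x)| ≤ specNorm M * (x ⬝ᵥ x) := by
  let v : EuclideanSpace ℝ (Fin d) := WithLp.toLp 2 x
  have hquad : x ⬝ᵥ (M *ᵥ x) = inner ℝ v (toEuclideanLin M v) := by
    simp [v, EuclideanSpace.inner_eq_star_dotProduct, dotProduct_comm]
  have hsq : x ⬝ᵥ x = ‖v‖ ^ 2 := by
    rw [EuclideanSpace.norm_sq_eq]
    simp [v, dotProduct, sq]
  rw [hquad, hsq]
  calc _ ≤ ‖v‖ * ‖toEuclideanLin M v‖ := abs_real_inner_le_norm _ _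
    _ ≤ ‖v‖ * (specNorm M * ‖v‖) := mul_le_mul_of_nonneg_left
        ((toEuclideanLin M).toContinuousLinearMap.le_opNorm v) (norm_nonneg v)
    _ = _ := by ring

theorem posSemidef_smul_one_sub_of_specNorm_le {d : ℕ} {E : Matrix (Fin d) (Fin d) ℝ}
    (hE : E.IsHermitian) {r : ℝ} (h : specNorm E ≤ r) : (r • 1 - E).PosSemidef := by
  refine .of_dotProduct_mulVec_nonneg ((isHermitian_one.smul (.all r)).sub hE) fun x => ?_
  simp only [star_trivial, sub_mulVec, smul_mulVec, one_mulVec, dotProduct_sub, dotProduct_smul,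
    smul_eq_mul, sub_nonneg]
  calc _ ≤ |x ⬝ᵥ (E *ᵥ x)| := le_abs_self _
    _ ≤ specNorm E * (x ⬝ᵥ x) := abs_dotProduct_mulVec_le_specNorm E x
    _ ≤ r * (x ⬝ᵥ x) := mul_le_mul_of_nonneg_right h (dotProduct_self_star_nonneg x)

theorem posSemidef_add_smul_one_of_specNorm_le {d : ℕ} {E : Matrix (Fin d) (Fin d) ℝ}
    (hE : E.IsHermitian) {r : ℝ} (h : specNorm E ≤ r) : (E + r • 1).PosSemidef := by
  simpa [add_comm] using posSemidef_smul_one_sub_of_specNorm_le hE.neg (by simpa using h)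

/-- A regularized approximate Hessian `H = Ĥ + c‖A‖·I` with `‖Ĥ − A‖ ≤ c‖A‖` is
positive definite and satisfies `(1 − 2cκ/(1+2cκ))·A⁻¹ ⪯ H⁻¹ ⪯ A⁻¹`,
where `κ = ‖A‖/λ_min(A)`. -/
theorem regularized_inverse_sandwich (d : ℕ) [NeZero d]
    (A : Matrix (Fin d) (Fin d) ℝ) (hA : A.PosDef)
    (κ : ℝ) (hκ : κ = specNorm A / (⨅ i, hA.isHermitian.eigenvalues i))
    (c : ℝ) (hc : 0 < c)
    (Hhat : Matrix (Fin d) (Fin d) ℝ) (hHhat : Hhat.PosSemidef)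
    (hclose : specNorm (Hhat - A) ≤ c * specNorm A)
    (H : Matrix (Fin d) (Fin d) ℝ)
    (hH : H = Hhat + (c * specNorm A) • (1 : Matrix (Fin d) (Fin d) ℝ)) :
    H.PosDef ∧ (A⁻¹ - H⁻¹).PosSemidef ∧
      (H⁻¹ - (1 - 2 * c * κ / (1 + 2 * c * κ)) • A⁻¹).PosSemidef := by
  set μ := ⨅ i, hA.isHermitian.eigenvalues i
  have hμ : 0 < μ := hA.iInf_eigenvalues_pos
  have hκ0 : 0 ≤ κ := hκ ▸ div_nonneg (norm_nonneg _) hμ.le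
  have hE : (Hhat - A).IsHermitian := hHhat.isHermitian.sub hA.isHermitian
  have hAH : (H - A).PosSemidef := by
    rw [hH, add_sub_right_comm]
    exact posSemidef_add_smul_one_of_specNorm_le hE hclose
  have hHpd : H.PosDef := by simpa using hA.add_posSemidef hAH
  have hHA : ((1 + 2 * c * κ) • A - H).PosSemidef := by
    have hκμ : 2 * c * κ * μ = 2 * (c * specNorm A) := by rw [hκ]; field_simp
    rw [show (1 + 2 * c * κ) • A - H = ((c * specNorm A) • 1 - (Hhat - A))
        + (2 * c * κ) • (A - μ • 1) by rw [hH, smul_sub, smul_smul, hκμ]; module]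
    exact (posSemidef_smul_one_sub_of_specNorm_le hE hclose).add
      ((hA.isHermitian.posSemidef_sub_iInf_eigenvalues_smul_one).smul (by positivity))
  have hcoef : (1 - 2 * c * κ / (1 + 2 * c * κ)) • A⁻¹ = ((1 + 2 * c * κ) • A)⁻¹ := by
    have : Invertible (1 + 2 * c * κ) := invertibleOfNonzero (by positivity)
    rw [inv_smul _ _ ((isUnit_iff_isUnit_det A).1 hA.isUnit), invOf_eq_inv]
    congr 1
    field_simp
    ring
  exact ⟨hHpd, hA.posSemidef_inv_sub_inv hAH, hcoef ▸ hHpd.posSemidef_inv_sub_inv hHA⟩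
end

section
/- Let A be a real symmetric positive definite d×d matrix with positive semidefinite square root A^{1/2}, let b ∈ ℝ^d, and let F(x) = (1/2)·xᵀAx − bᵀx, so ∇F(x) = Ax − b. Let H be an invertible d×d matrix, let θ ∈ ℝ, and given points x, x' ∈ ℝ^d define y = (1 + θ)·x − θ·x' and x⁺ = y − H⁻¹∇F(y). Then A^{-1/2}∇F(x⁺) = (I − A^{1/2} H⁻¹ A^{1/2})·( (1 + θ)·A^{-1/2}∇F(x) − θ·A^{-1/2}∇F(x') ). -/
/-!
The gradient `∇F(v) = A v − b` is affine, so it commutes with the extrapolation `y`, and the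
step `x⁺ = y − H⁻¹∇F(y)` multiplies the residual by `1 − A H⁻¹`. Writing `A = S²` with
`S = A^{1/2}` invertible, `S⁻¹ (1 − S² H⁻¹) = (1 − S H⁻¹ S) S⁻¹`.
-/

open Matrix

namespace Matrix.PosSemidef

open scoped ComplexOrder

/-- The square root of a positive semidefinite matrix, as defined in the older Mathlib. -/
noncomputable def sqrt {n 𝕜 : Type*} [Fintype n] [DecidableEq n] [RCLike 𝕜]
    {A : Matrix n n 𝕜} (hA : A.PosSemidef) : Matrix n n 𝕜 :=
  hA.1.eigenvectorUnitary.1 * diagonal ((↑) ∘ (√·) ∘ hA.1.eigenvalues) *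
  (star hA.1.eigenvectorUnitary : Matrix n n 𝕜)

lemma sqrt_mul_self {n 𝕜 : Type*} [Fintype n] [DecidableEq n] [RCLike 𝕜]
    {A : Matrix n n 𝕜} (hA : A.PosSemidef) : hA.sqrt * hA.sqrt = A := by
  set U : Matrix n n 𝕜 := hA.1.eigenvectorUnitary.1
  set D : Matrix n n 𝕜 := diagonal ((↑) ∘ (√·) ∘ hA.1.eigenvalues)
  have hU : star U * U = 1 := Unitary.star_mul_self_of_mem hA.1.eigenvectorUnitary.2
  have hD : D * D = diagonal (RCLike.ofReal ∘ hA.1.eigenvalues) := by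
    rw [diagonal_mul_diagonal]
    congr 1
    funext i
    simp only [Function.comp_apply, ← RCLike.ofReal_mul,
      Real.mul_self_sqrt (hA.eigenvalues_nonneg i)]
  calc hA.sqrt * hA.sqrt = U * (D * (star U * U) * D) * star U := by
        simp only [sqrt, U, D, mul_assoc]
    _ = A := by
        rw [hU, mul_one, hD]
        exact hA.1.spectral_theorem.symm

end Matrix.PosSemidef

namespace Matrix

variable {n R : Type*} [Fintype n] [CommRing R]

lemma mulVec_extrapolate_sub (A : Matrix n n R) (b : n → R) (θ : R) (x x' : n → R) :
    A *ᵥ ((1 + θ) • x - θ • x') - b = (1 + θ) • (A *ᵥ x - b) - θ • (A *ᵥ x' - b) := by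
  rw [mulVec_sub, mulVec_smul, mulVec_smul]
  module

variable [DecidableEq n]

lemma isUnit_det_of_mul_self_eq {S A : Matrix n n R} (hSS : S * S = A)
    (hA : IsUnit A.det) : IsUnit S.det := by
  rw [← hSS, det_mul] at hA
  exact isUnit_of_mul_isUnit_left hA

lemma inv_mul_one_sub_mul_self_mul {S : Matrix n n R} (hS : IsUnit S.det)
    (M : Matrix n n R) : S⁻¹ * (1 - S * S * M) = (1 - S * M * S) * S⁻¹ := by
  rw [mul_sub, sub_mul, mul_one, one_mul, ← mul_assoc, ← mul_assoc, nonsing_inv_mul S hS,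
    one_mul, mul_assoc, mul_nonsing_inv S hS, mul_one]

lemma mulVec_sub_mulVec_residual (A M : Matrix n n R) (b y : n → R) :
    A *ᵥ (y - M *ᵥ (A *ᵥ y - b)) - b = (1 - A * M) *ᵥ (A *ᵥ y - b) := by
  rw [mulVec_sub, sub_mulVec, one_mulVec, mulVec_mulVec]
  abel

end Matrix

theorem accelerated_newton_one_step_recursion_general (d : ℕ)
    (A : Matrix (Fin d) (Fin d) ℝ) (hA : A.PosDef)
    (b : Fin d → ℝ)
    (gradF : (Fin d → ℝ) → (Fin d → ℝ)) (hgrad : ∀ v, gradF v = A.mulVec v - b)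
    (H : Matrix (Fin d) (Fin d) ℝ)
    (θ : ℝ) (x x' : Fin d → ℝ)
    (y : Fin d → ℝ) (hy : y = (1 + θ) • x - θ • x')
    (xplus : Fin d → ℝ) (hxplus : xplus = y - H⁻¹.mulVec (gradF y)) :
    (hA.posSemidef.sqrt)⁻¹.mulVec (gradF xplus) =
      ((1 : Matrix (Fin d) (Fin d) ℝ) -
          hA.posSemidef.sqrt * H⁻¹ * hA.posSemidef.sqrt).mulVec
        ((1 + θ) • (hA.posSemidef.sqrt)⁻¹.mulVec (gradF x) -
          θ • (hA.posSemidef.sqrt)⁻¹.mulVec (gradF x')) := by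
  set S := hA.posSemidef.sqrt
  have hSS : S * S = A := hA.posSemidef.sqrt_mul_self
  have hS : IsUnit S.det := isUnit_det_of_mul_self_eq hSS ((isUnit_iff_isUnit_det A).mp hA.isUnit)
  have hgy : gradF y = (1 + θ) • gradF x - θ • gradF x' := by
    simp only [hgrad, hy, mulVec_extrapolate_sub]
  calc S⁻¹ *ᵥ gradF xplus = S⁻¹ *ᵥ ((1 - A * H⁻¹) *ᵥ gradF y) := by
        rw [hxplus, hgrad, hgrad y, mulVec_sub_mulVec_residual]
    _ = (1 - S * H⁻¹ * S) *ᵥ (S⁻¹ *ᵥ gradF y) := by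
        rw [mulVec_mulVec, mulVec_mulVec, ← hSS, inv_mul_one_sub_mul_self_mul hS]
    _ = _ := by rw [hgy, mulVec_sub, mulVec_smul, mulVec_smul]

/-- One step of accelerated approximate Newton on a quadratic
`F(x) = (1/2)xᵀAx − bᵀx`: with `y = (1+θ)x − θx'` and `x⁺ = y − H⁻¹∇F(y)`,
`A^{-1/2}∇F(x⁺) = (I − A^{1/2}H⁻¹A^{1/2})((1+θ)A^{-1/2}∇F(x) − θA^{-1/2}∇F(x'))`. -/
theorem accelerated_newton_one_step_recursion (d : ℕ)
    (A : Matrix (Fin d) (Fin d) ℝ) (hA : A.PosDef)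
    (b : Fin d → ℝ)
    (gradF : (Fin d → ℝ) → (Fin d → ℝ)) (hgrad : ∀ v, gradF v = A.mulVec v - b)
    (H : Matrix (Fin d) (Fin d) ℝ) (hH : IsUnit H)
    (θ : ℝ) (x x' : Fin d → ℝ)
    (y : Fin d → ℝ) (hy : y = (1 + θ) • x - θ • x')
    (xplus : Fin d → ℝ) (hxplus : xplus = y - H⁻¹.mulVec (gradF y)) :
    (hA.posSemidef.sqrt)⁻¹.mulVec (gradF xplus) =
      ((1 : Matrix (Fin d) (Fin d) ℝ) -
          hA.posSemidef.sqrt * H⁻¹ * hA.posSemidef.sqrt).mulVec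
        ((1 + θ) • (hA.posSemidef.sqrt)⁻¹.mulVec (gradF x) -
          θ • (hA.posSemidef.sqrt)⁻¹.mulVec (gradF x')) :=
  accelerated_newton_one_step_recursion_general d A hA b gradF hgrad H θ x x' y hy xplus hxplus
end

section
/- Let 0 < π < 1, set θ = (1 − √(1 − π))/(1 + √(1 − π)), and let 0 ≤ λ ≤ π. Then every complex root z of the quadratic equation z² − (1+θ)λ·z + θλ = 0 satisfies |z| ≤ 1 − √(1 − π). Moreover, for 0 < λ ≤ π the discriminant (1+θ)²λ² − 4θλ is nonpositive and both roots have modulus exactly √(θλ). -/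
/-! Writing `s = √(1 − π)`, one has `θ = (1 − s)/(1 + s)`, hence `(1 + θ)² π = 4θ` and
`θ π = (1 − s)²`. The first identity factors the discriminant as `(1 + θ)² λ (λ − π) ≤ 0`, so
the roots are complex conjugates (or a double real root) whose product `θ λ` is `|z|²`; the
second gives `√(θ λ) ≤ √(θ π) = 1 − s`. -/

namespace Complex

theorem normSq_eq_of_sq_sub_mul_add_eq_zero {b c : ℝ} (hdisc : b ^ 2 - 4 * c ≤ 0) {z : ℂ}
    (hz : z ^ 2 - b * z + c = 0) : normSq z = c := by
  have hre : z.re ^ 2 - z.im ^ 2 - b * z.re + c = 0 := by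
    simpa [sq] using congrArg re hz
  have him : z.im * (2 * z.re - b) = 0 := by
    have him := congrArg im hz
    simp only [sq, sub_im, add_im, mul_im, ofReal_re, ofReal_im, zero_im] at him
    linear_combination him
  have hcenter : 2 * z.re - b = 0 := by
    rcases mul_eq_zero.mp him with hreal | hcenter
    · -- a real root of a quadratic with nonpositive discriminant is the double root `b / 2`
      nlinarith
    · exact hcenter
  rw [normSq_apply]
  linear_combination -hre + z.re * hcenter

theorem norm_eq_sqrt_of_sq_sub_mul_add_eq_zero {b c : ℝ} (hdisc : b ^ 2 - 4 * c ≤ 0) {z : ℂ}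
    (hz : z ^ 2 - b * z + c = 0) : ‖z‖ = √c := by
  rw [← normSq_eq_of_sq_sub_mul_add_eq_zero hdisc hz, ← Real.sqrt_sq (norm_nonneg z),
    Complex.sq_norm]

end Complex

section Momentum

variable {s : ℝ}

theorem sq_one_add_div_one_add_mul_one_sub_sq (hs : 1 + s ≠ 0) :
    (1 + (1 - s) / (1 + s)) ^ 2 * (1 - s ^ 2) = 4 * ((1 - s) / (1 + s)) := by
  field_simp
  ring

theorem div_one_add_mul_one_sub_sq (hs : 1 + s ≠ 0) :
    (1 - s) / (1 + s) * (1 - s ^ 2) = (1 - s) ^ 2 := by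
  field_simp
  ring

end Momentum

theorem quadratic_roots_modulus_bound_general (π θ lam : ℝ)
    (hπ1 : π < 1)
    (hθ : θ = (1 - Real.sqrt (1 - π)) / (1 + Real.sqrt (1 - π)))
    (hlam0 : 0 ≤ lam) (hlamπ : lam ≤ π) :
    (∀ z : ℂ, z ^ 2 - (((1 + θ) * lam : ℝ) : ℂ) * z + ((θ * lam : ℝ) : ℂ) = 0 →
        ‖z‖ ≤ 1 - Real.sqrt (1 - π)) ∧
      (0 < lam →
        (1 + θ) ^ 2 * lam ^ 2 - 4 * θ * lam ≤ 0 ∧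
          ∀ z : ℂ, z ^ 2 - (((1 + θ) * lam : ℝ) : ℂ) * z + ((θ * lam : ℝ) : ℂ) = 0 →
            ‖z‖ = Real.sqrt (θ * lam)) := by
  set s := √(1 - π)
  have hs0 : 0 ≤ s := Real.sqrt_nonneg _
  have hs1 : s ≤ 1 := Real.sqrt_le_one.mpr (by linarith)
  have hπ : π = 1 - s ^ 2 := by rw [Real.sq_sqrt (by linarith)]; ring
  have hs : 1 + s ≠ 0 := by positivity
  have hθ0 : 0 ≤ θ := hθ ▸ div_nonneg (by linarith) (by positivity)
  have hkey : (1 + θ) ^ 2 * π = 4 * θ := by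
    rw [hθ, hπ]; exact sq_one_add_div_one_add_mul_one_sub_sq hs
  have hθπ : θ * π = (1 - s) ^ 2 := by
    rw [hθ, hπ]; exact div_one_add_mul_one_sub_sq hs
  have hdisc : (1 + θ) ^ 2 * lam ^ 2 - 4 * θ * lam ≤ 0 := by
    have hfactor : (1 + θ) ^ 2 * lam ^ 2 - 4 * θ * lam = (1 + θ) ^ 2 * lam * (lam - π) := by
      linear_combination lam * hkey
    rw [hfactor]
    exact mul_nonpos_of_nonneg_of_nonpos (by positivity) (by linarith)
  have hnorm : ∀ z : ℂ, z ^ 2 - (((1 + θ) * lam : ℝ) : ℂ) * z + ((θ * lam : ℝ) : ℂ) = 0 →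
      ‖z‖ = √(θ * lam) :=
    fun z => Complex.norm_eq_sqrt_of_sq_sub_mul_add_eq_zero (by linarith)
  refine ⟨fun z hz => ?_, fun _ => ⟨hdisc, hnorm⟩⟩
  calc ‖z‖ = √(θ * lam) := hnorm z hz
    _ ≤ √(θ * π) := Real.sqrt_le_sqrt (mul_le_mul_of_nonneg_left hlamπ hθ0)
    _ = 1 - s := by rw [hθπ, Real.sqrt_sq (by linarith)]

/-- With `θ = (1 − √(1−π))/(1 + √(1−π))` and `0 ≤ lam ≤ π`, every complex root of
`z² − (1+θ)·lam·z + θ·lam = 0` has modulus at most `1 − √(1−π)`; moreover for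
`0 < lam ≤ π` the discriminant is nonpositive and both roots have modulus
exactly `√(θ·lam)`. -/
theorem quadratic_roots_modulus_bound (π θ lam : ℝ)
    (hπ0 : 0 < π) (hπ1 : π < 1)
    (hθ : θ = (1 - Real.sqrt (1 - π)) / (1 + Real.sqrt (1 - π)))
    (hlam0 : 0 ≤ lam) (hlamπ : lam ≤ π) :
    (∀ z : ℂ, z ^ 2 - (((1 + θ) * lam : ℝ) : ℂ) * z + ((θ * lam : ℝ) : ℂ) = 0 →
        ‖z‖ ≤ 1 - Real.sqrt (1 - π)) ∧
      (0 < lam →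
        (1 + θ) ^ 2 * lam ^ 2 - 4 * θ * lam ≤ 0 ∧
          ∀ z : ℂ, z ^ 2 - (((1 + θ) * lam : ℝ) : ℂ) * z + ((θ * lam : ℝ) : ℂ) = 0 →
            ‖z‖ = Real.sqrt (θ * lam)) :=
  quadratic_roots_modulus_bound_general π θ lam hπ1 hθ hlam0 hlamπ
end

section
/- Let A and B be real symmetric positive definite d×d matrices and let 0 < ε < 1 be such that (1 − ε)·B ⪯ A ⪯ (1 + ε)·B in the Loewner order. Then for every b ∈ ℝ^d, ‖B⁻¹b − A⁻¹b‖_A ≤ ε·‖A⁻¹b‖_A, where ‖v‖_A = √(vᵀAv). -/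
/-! With `x = A⁻¹b` the error is `w = B⁻¹b - x`, and `A w = M x` for `M = A B⁻¹ A - A`. Inverting
`(1 - ε)B ⪯ A ⪯ (1 + ε)B` and conjugating by `A` gives `-εA ⪯ M ⪯ εA`, i.e. `M` is a symmetric
form of norm at most `ε` relative to the inner product of `A`, so `‖w‖_A ≤ ε‖x‖_A`. -/

open Matrix

/-- The `A`-norm of a vector: `‖v‖_A = √(vᵀ A v)`. -/
noncomputable def anorm {d : ℕ} (A : Matrix (Fin d) (Fin d) ℝ) (v : Fin d → ℝ) : ℝ :=
  Real.sqrt (v ⬝ᵥ A.mulVec v)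

namespace Matrix

variable {n : Type*} [Fintype n]

theorem dotProduct_mulVec_le_sq_mul_of_mulVec_eq {R : Type*} [CommRing R] [LinearOrder R]
    [IsStrictOrderedRing R] [StarRing R] [TrivialStar R] {A M : Matrix n n R} {ε : R}
    (hε : 0 < ε) (hA : A.IsSymm) (hle : (ε • A - M).PosSemidef) (hge : (ε • A + M).PosSemidef)
    {x w : n → R} (hw : A *ᵥ w = M *ᵥ x) :
    w ⬝ᵥ A *ᵥ w ≤ ε ^ 2 * (x ⬝ᵥ A *ᵥ x) := by
  have hM : M.IsSymm := by
    simpa using (hA.smul ε).sub (isHermitian_iff_isSymm.1 hle.isHermitian)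
  have hMsymm : x ⬝ᵥ M *ᵥ w = w ⬝ᵥ M *ᵥ x := by
    rw [← dotProduct_transpose_mulVec, hM.eq]
  have hww : w ⬝ᵥ A *ᵥ w = w ⬝ᵥ M *ᵥ x := by rw [hw]
  have hP := hle.dotProduct_mulVec_nonneg (ε • x + w)
  have hN := hge.dotProduct_mulVec_nonneg (ε • x - w)
  simp only [star_trivial, sub_mulVec, add_mulVec, smul_mulVec, mulVec_add, mulVec_sub,
    mulVec_smul, dotProduct_add, add_dotProduct, dotProduct_sub, sub_dotProduct,
    smul_dotProduct, dotProduct_smul, smul_eq_mul] at hP hN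
  -- `(εA - M)[εx + w] + (εA + M)[εx - w] = 2ε (ε² xᵀAx - wᵀAw)`
  have key : 0 ≤ 2 * ε * (ε ^ 2 * (x ⬝ᵥ A *ᵥ x) - w ⬝ᵥ A *ᵥ w) := by
    linear_combination hP + hN + (4 * ε) * hww - (2 * ε) * hMsymm
  linarith [(mul_nonneg_iff_of_pos_left (by positivity : (0 : R) < 2 * ε)).1 key]

variable [DecidableEq n]

theorem PosDef.posSemidef_inv_sub_inv_s12 {K : Type*} [Field K] [PartialOrder K] [StarRing K]
    [StarOrderedRing K] {X Y : Matrix n n K} (hX : X.PosDef) (hY : Y.PosDef)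
    (h : (Y - X).PosSemidef) : (X⁻¹ - Y⁻¹).PosSemidef := by
  have := hX.isUnit.invertible
  have := hX.inv.isUnit.invertible
  have := hY.isUnit.invertible
  -- `Y - X` and `X⁻¹ - Y⁻¹` are the two Schur complements of this block matrix
  have hblocks : (fromBlocks X⁻¹ 1 1 Y).PosSemidef := by
    simpa using (PosDef.fromBlocks₁₁ (1 : Matrix n n K) Y hX.inv).2
      (by simpa [inv_inv_of_invertible] using h)
  simpa using (PosDef.fromBlocks₂₂ X⁻¹ (1 : Matrix n n K) hY).1 (by simpa using hblocks)

theorem inv_smul_of_ne_zero {K : Type*} [Field K] {c : K} (hc : c ≠ 0) {B : Matrix n n K}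
    (hB : IsUnit B.det) : (c • B)⁻¹ = c⁻¹ • B⁻¹ :=
  inv_eq_left_inv (by simp [smul_smul, hc, nonsing_inv_mul _ hB])

theorem PosDef.posSemidef_smul_sub_mul_inv_mul {A B : Matrix n n ℝ} (hA : A.PosDef)
    (hB : B.PosDef) {c : ℝ} (hc : 0 < c) (h : (c • B - A).PosSemidef) :
    (c • A - A * B⁻¹ * A).PosSemidef := by
  have hinv := (hA.posSemidef_inv_sub_inv_s12 (hB.smul hc) h).smul hc.le
  have hconj := hinv.conjTranspose_mul_mul_same A
  rw [hA.isHermitian.eq, inv_smul_of_ne_zero hc.ne' hB.det_pos.ne'.isUnit] at hconj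
  simpa [mul_sub, sub_mul, smul_sub, smul_smul, hc.ne',
    mul_nonsing_inv _ hA.det_pos.ne'.isUnit] using hconj

theorem PosDef.posSemidef_mul_inv_mul_sub_smul {A B : Matrix n n ℝ} (hA : A.PosDef)
    (hB : B.PosDef) {c : ℝ} (hc : 0 < c) (h : (A - c • B).PosSemidef) :
    (A * B⁻¹ * A - c • A).PosSemidef := by
  have hinv := ((hB.smul hc).posSemidef_inv_sub_inv_s12 hA h).smul hc.le
  have hconj := hinv.conjTranspose_mul_mul_same A
  rw [hA.isHermitian.eq, inv_smul_of_ne_zero hc.ne' hB.det_pos.ne'.isUnit] at hconj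
  simpa [mul_sub, sub_mul, smul_sub, smul_smul, hc.ne',
    mul_nonsing_inv _ hA.det_pos.ne'.isUnit] using hconj

end Matrix

/-- If `(1 − ε)B ⪯ A ⪯ (1 + ε)B`, then one preconditioned solve satisfies
`‖B⁻¹b − A⁻¹b‖_A ≤ ε‖A⁻¹b‖_A`. -/
theorem preconditioner_one_step_error (d : ℕ)
    (A B : Matrix (Fin d) (Fin d) ℝ) (hA : A.PosDef) (hB : B.PosDef)
    (ε : ℝ) (hε0 : 0 < ε) (hε1 : ε < 1)
    (hlow : (A - (1 - ε) • B).PosSemidef)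
    (hup : ((1 + ε) • B - A).PosSemidef) :
    ∀ b : Fin d → ℝ,
      anorm A (B⁻¹.mulVec b - A⁻¹.mulVec b) ≤ ε * anorm A (A⁻¹.mulVec b) := by
  intro b
  have hle : (ε • A - (A * B⁻¹ * A - A)).PosSemidef := by
    convert hA.posSemidef_smul_sub_mul_inv_mul hB (by linarith) hup using 1
    module
  have hge : (ε • A + (A * B⁻¹ * A - A)).PosSemidef := by
    convert hA.posSemidef_mul_inv_mul_sub_smul hB (by linarith) hlow using 1
    module
  have hw : A *ᵥ (B⁻¹ *ᵥ b - A⁻¹ *ᵥ b) = (A * B⁻¹ * A - A) *ᵥ (A⁻¹ *ᵥ b) := by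
    simp [mulVec_sub, sub_mulVec, mulVec_mulVec, Matrix.sub_mul, mul_assoc,
      mul_nonsing_inv _ hA.det_pos.ne'.isUnit]
  have hsq := dotProduct_mulVec_le_sq_mul_of_mulVec_eq hε0
    (isHermitian_iff_isSymm.1 hA.isHermitian) hle hge hw
  rw [anorm, anorm, ← Real.sqrt_sq hε0.le, ← Real.sqrt_mul (sq_nonneg ε)]
  exact Real.sqrt_le_sqrt hsq
end

section
/- Let B be a real s×d matrix, let α > 0, and set H = BᵀB + α·I_d and A = BBᵀ + α·I_s. Let g ∈ ℝ^d, set ĝ = α⁻¹·Bg, and for an arbitrary vector q ∈ ℝ^s define p = α⁻¹·g − Bᵀq. Then p − H⁻¹g = Bᵀ(A⁻¹ĝ − q), and consequently ‖Hp − g‖ ≤ ‖H‖·‖B‖·‖A⁻¹ĝ − q‖. -/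
open Matrix
open scoped BigOperators

/-- Euclidean norm of a vector. -/
noncomputable def vecEnorm {d : ℕ} (v : Fin d → ℝ) : ℝ := Real.sqrt (∑ i, (v i) ^ 2)

/-!
Both `A = BBᵀ + αI` and `H = BᵀB + αI` are positive definite, hence invertible. From the
push-through identity `H Bᵀ = Bᵀ A` one gets Woodbury's formula `H⁻¹ = α⁻¹ (I - Bᵀ A⁻¹ B)`, and
applying it to `g` gives `p - H⁻¹g = Bᵀ(A⁻¹ĝ - q)`. Hence the residual is
`Hp - g = H Bᵀ (A⁻¹ĝ - q)`, which is bounded by submultiplicativity of the operator norm together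
with `‖Bᵀ‖ = ‖B‖`.
-/

namespace Matrix

section Woodbury

variable {K : Type*} [Field K] {m n : Type*} [Fintype m] [Fintype n] [DecidableEq m]
  [DecidableEq n]

lemma mul_add_smul_one_mul_comm (C : Matrix n m K) (B : Matrix m n K) (α : K) :
    (C * B + α • (1 : Matrix n n K)) * C = C * (B * C + α • (1 : Matrix m m K)) := by
  rw [Matrix.add_mul, Matrix.mul_add, Matrix.smul_mul, Matrix.mul_smul, Matrix.one_mul,
    Matrix.mul_one, Matrix.mul_assoc]

lemma mul_add_smul_one_inv_eq (C : Matrix n m K) (B : Matrix m n K) {α : K} (hα : α ≠ 0)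
    (h : IsUnit (B * C + α • (1 : Matrix m m K)).det) :
    (C * B + α • (1 : Matrix n n K))⁻¹ = α⁻¹ • (1 - C * (B * C + α • 1)⁻¹ * B) := by
  refine inv_eq_right_inv ?_
  have hCB : (C * B + α • 1) * (C * (B * C + α • 1)⁻¹ * B) = C * B := by
    rw [← Matrix.mul_assoc, ← Matrix.mul_assoc, mul_add_smul_one_mul_comm, Matrix.mul_assoc C,
      mul_nonsing_inv _ h, Matrix.mul_one]
  rw [Matrix.mul_smul, Matrix.mul_sub, hCB, Matrix.mul_one, add_sub_cancel_left, smul_smul,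
    inv_mul_cancel₀ hα, one_smul]

lemma woodbury_approx_sub_inv_mulVec (C : Matrix n m K) (B : Matrix m n K) {α : K} (hα : α ≠ 0)
    (h : IsUnit (B * C + α • (1 : Matrix m m K)).det) (g : n → K) (q : m → K) :
    (α⁻¹ • g - C *ᵥ q) - (C * B + α • (1 : Matrix n n K))⁻¹ *ᵥ g =
      C *ᵥ ((B * C + α • 1)⁻¹ *ᵥ (α⁻¹ • B *ᵥ g) - q) := by
  rw [mul_add_smul_one_inv_eq C B hα h, smul_mulVec, sub_mulVec, one_mulVec, mulVec_sub, smul_sub]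
  simp only [mulVec_smul, mulVec_mulVec, Matrix.mul_assoc]
  abel

end Woodbury

lemma isUnit_det_mul_transpose_add_smul_one {m n : Type*} [Fintype m] [Fintype n] [DecidableEq m]
    (B : Matrix m n ℝ) {α : ℝ} (hα : 0 < α) : IsUnit (B * Bᵀ + α • (1 : Matrix m m ℝ)).det := by
  have hBBt : (B * Bᵀ).PosSemidef := by
    simpa only [conjTranspose_eq_transpose_of_trivial] using posSemidef_self_mul_conjTranspose B
  have hαI : (α • (1 : Matrix m m ℝ)).PosDef := by
    rw [smul_one_eq_diagonal]
    exact .diagonal fun _ => hα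
  exact (isUnit_iff_isUnit_det _).1 (PosDef.posSemidef_add hBBt hαI).isUnit

lemma mulVec_sub_eq_mulVec_of_sub_inv_mulVec_eq {K n : Type*} [Field K] [Fintype n]
    [DecidableEq n] {H : Matrix n n K} (hH : IsUnit H.det) {p g w : n → K}
    (h : p - H⁻¹ *ᵥ g = w) : H *ᵥ p - g = H *ᵥ w := by
  rw [← h, mulVec_sub, mulVec_mulVec, mul_nonsing_inv H hH, one_mulVec]

end Matrix

section SpectralNorm

open scoped Matrix.Norms.L2Operator

variable {k m n : ℕ}

lemma specNorm_eq_norm (A : Matrix (Fin m) (Fin n) ℝ) : specNorm A = ‖A‖ := rfl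

lemma vecEnorm_eq_norm_toLp (v : Fin n → ℝ) : vecEnorm v = ‖WithLp.toLp 2 v‖ := by
  simp only [vecEnorm, EuclideanSpace.norm_eq, Real.norm_eq_abs, sq_abs]

lemma vecEnorm_mulVec_le (A : Matrix (Fin m) (Fin n) ℝ) (x : Fin n → ℝ) :
    vecEnorm (A *ᵥ x) ≤ specNorm A * vecEnorm x := by
  rw [specNorm_eq_norm, vecEnorm_eq_norm_toLp, vecEnorm_eq_norm_toLp]
  exact A.l2_opNorm_mulVec (WithLp.toLp 2 x)

lemma specNorm_transpose (A : Matrix (Fin m) (Fin n) ℝ) : specNorm Aᵀ = specNorm A := by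
  rw [specNorm_eq_norm, specNorm_eq_norm, ← A.conjTranspose_eq_transpose_of_trivial]
  exact A.l2_opNorm_conjTranspose

lemma vecEnorm_mulVec_mulVec_le (A : Matrix (Fin k) (Fin m) ℝ) (C : Matrix (Fin m) (Fin n) ℝ)
    (v : Fin n → ℝ) : vecEnorm (A *ᵥ (C *ᵥ v)) ≤ specNorm A * specNorm C * vecEnorm v :=
  calc vecEnorm (A *ᵥ (C *ᵥ v)) ≤ specNorm A * vecEnorm (C *ᵥ v) := vecEnorm_mulVec_le A _
    _ ≤ specNorm A * (specNorm C * vecEnorm v) :=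
        mul_le_mul_of_nonneg_left (vecEnorm_mulVec_le C v) (norm_nonneg _)
    _ = specNorm A * specNorm C * vecEnorm v := (mul_assoc ..).symm

end SpectralNorm

/-- Woodbury-based sub-problem solver accuracy: with `H = BᵀB + αI_d`,
`A = BBᵀ + αI_s`, `ĝ = α⁻¹Bg` and `p = α⁻¹g − Bᵀq`, one has
`p − H⁻¹g = Bᵀ(A⁻¹ĝ − q)` and `‖Hp − g‖ ≤ ‖H‖‖B‖‖A⁻¹ĝ − q‖`. -/
theorem woodbury_approximate_subproblem_solver (s d : ℕ)
    (B : Matrix (Fin s) (Fin d) ℝ) (α : ℝ) (hα : 0 < α)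
    (H : Matrix (Fin d) (Fin d) ℝ)
    (hH : H = Bᵀ * B + α • (1 : Matrix (Fin d) (Fin d) ℝ))
    (A : Matrix (Fin s) (Fin s) ℝ)
    (hA : A = B * Bᵀ + α • (1 : Matrix (Fin s) (Fin s) ℝ))
    (g : Fin d → ℝ)
    (ghat : Fin s → ℝ) (hghat : ghat = α⁻¹ • B.mulVec g)
    (q : Fin s → ℝ)
    (p : Fin d → ℝ) (hp : p = α⁻¹ • g - Bᵀ.mulVec q) :
    p - H⁻¹.mulVec g = Bᵀ.mulVec (A⁻¹.mulVec ghat - q) ∧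
      vecEnorm (H.mulVec p - g) ≤
        specNorm H * specNorm B * vecEnorm (A⁻¹.mulVec ghat - q) := by
  have hAdet : IsUnit (B * Bᵀ + α • (1 : Matrix (Fin s) (Fin s) ℝ)).det :=
    isUnit_det_mul_transpose_add_smul_one B hα
  have hHdet : IsUnit H.det := by
    simpa only [hH, transpose_transpose] using isUnit_det_mul_transpose_add_smul_one Bᵀ hα
  have herror : p - H⁻¹ *ᵥ g = Bᵀ *ᵥ (A⁻¹ *ᵥ ghat - q) := by
    rw [hp, hH, hA, hghat]
    exact woodbury_approx_sub_inv_mulVec Bᵀ B hα.ne' hAdet g q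
  refine ⟨herror, ?_⟩
  rw [mulVec_sub_eq_mulVec_of_sub_inv_mulVec_eq hHdet herror, ← specNorm_transpose B]
  exact vecEnorm_mulVec_mulVec_le H Bᵀ _
end
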